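/- arXiv:1403.5099 — 2 statements merged into one kernel-verified Lean document; each statement's English description precedes it below -/
import Mathlib

section
/- If A is a P²-matrix, then A is invertible and A⁻¹ is a P²-matrix. -/
open Matrix BigOperators

/-- The principal minor of `A` indexed by the finset `s`. -/
noncomputable def principalMinor {n : ℕ} (A : Matrix (Fin n) (Fin n) ℝ) (s : Finset (Fin n)) : ℝ :=
  (A.submatrix (fun i : {x // x ∈ s} => (i : Fin n)) (fun j : {x // x ∈ s} => (j : Fin n))).det

/-- `A` is a P-matrix: all principal minors are positive. -/
def IsPMatrix {n : ℕ} (A : Matrix (Fin n) (Fin n) ℝ) : Prop :=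
  ∀ s : Finset (Fin n), s.Nonempty → 0 < principalMinor A s

/-- `A` is a Q-matrix: for each `k` with `1 ≤ k ≤ n`, the sum of all `k × k`
principal minors of `A` is positive. -/
def IsQMatrix {n : ℕ} (A : Matrix (Fin n) (Fin n) ℝ) : Prop :=
  ∀ k : ℕ, 1 ≤ k → k ≤ n →
    0 < ∑ s ∈ Finset.univ.filter (fun s : Finset (Fin n) => s.card = k), principalMinor A s

/-- `A` is a P²-matrix: both `A` and `A²` are P-matrices. -/
def IsP2Matrix {n : ℕ} (A : Matrix (Fin n) (Fin n) ℝ) : Prop :=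
  IsPMatrix A ∧ IsPMatrix (A ^ 2)

/-! By Jacobi's complementary minor identity, `det A · det (A⁻¹)[s,s] = det A[sᶜ,sᶜ]`, so every
principal minor of the inverse of a P-matrix is a quotient of two positive principal minors of `A`.
Since `(A⁻¹)² = (A²)⁻¹`, this applies to both `A` and `A²`. -/

/-- **Jacobi's complementary minor identity**, in block form. If `M * X = 1`, then
`M * [[X₁₁, 0], [X₂₁, 1]] = [[1, M₁₂], [0, M₂₂]]`; take determinants. -/
theorem Matrix.det_mul_det_toBlocks₁₁_of_mul_eq_one {m n R : Type*} [Fintype m] [Fintype n]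
    [DecidableEq m] [DecidableEq n] [CommRing R] {M X : Matrix (m ⊕ n) (m ⊕ n) R}
    (hMX : M * X = 1) : M.det * X.toBlocks₁₁.det = M.toBlocks₂₂.det := by
  rw [← fromBlocks_toBlocks M, ← fromBlocks_toBlocks X, fromBlocks_multiply, ← fromBlocks_one,
    fromBlocks_inj] at hMX
  obtain ⟨h₁₁, -, h₂₁, -⟩ := hMX
  have hblocks : M * fromBlocks X.toBlocks₁₁ 0 X.toBlocks₂₁ 1 =
      fromBlocks 1 M.toBlocks₁₂ 0 M.toBlocks₂₂ := by
    conv_lhs => rw [← fromBlocks_toBlocks M]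
    rw [fromBlocks_multiply, h₁₁, h₂₁]
    simp only [Matrix.mul_zero, Matrix.mul_one, zero_add]
  have := congrArg det hblocks
  rwa [det_mul, det_fromBlocks_zero₁₂, det_fromBlocks_zero₂₁, det_one, det_one, mul_one,
    one_mul] at this

section PrincipalMinor

variable {n : ℕ}

lemma principalMinor_empty (A : Matrix (Fin n) (Fin n) ℝ) : principalMinor A ∅ = 1 :=
  det_isEmpty

lemma principalMinor_univ (A : Matrix (Fin n) (Fin n) ℝ) : principalMinor A Finset.univ = A.det :=
  det_submatrix_equiv_self (Equiv.subtypeUnivEquiv Finset.mem_univ) A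

lemma det_mul_principalMinor_of_mul_eq_one {A B : Matrix (Fin n) (Fin n) ℝ} (hAB : A * B = 1)
    (s : Finset (Fin n)) : A.det * principalMinor B s = principalMinor A sᶜ := by
  let e := Equiv.sumCompl (· ∈ s)
  have h := det_mul_det_toBlocks₁₁_of_mul_eq_one (M := A.submatrix e e) (X := B.submatrix e e)
    (by rw [submatrix_mul_equiv, hAB, submatrix_one_equiv])
  rw [det_submatrix_equiv_self] at h
  calc A.det * principalMinor B s = (A.submatrix e e).toBlocks₂₂.det := h
    _ = principalMinor A sᶜ :=
      (det_submatrix_equiv_self (Equiv.subtypeEquivRight fun _ => Finset.mem_compl) _).symm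

end PrincipalMinor

namespace IsPMatrix

variable {n : ℕ} {A : Matrix (Fin n) (Fin n) ℝ}

lemma principalMinor_pos (hA : IsPMatrix A) (s : Finset (Fin n)) : 0 < principalMinor A s := by
  rcases s.eq_empty_or_nonempty with rfl | hs
  · rw [principalMinor_empty]; exact one_pos
  · exact hA s hs

lemma det_pos (hA : IsPMatrix A) : 0 < A.det :=
  principalMinor_univ A ▸ hA.principalMinor_pos _

lemma inv (hA : IsPMatrix A) : IsPMatrix A⁻¹ := by
  intro s _
  have hdet := hA.det_pos
  have hJacobi := det_mul_principalMinor_of_mul_eq_one (mul_nonsing_inv A hdet.ne'.isUnit) s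
  have hcompl := hA.principalMinor_pos sᶜ
  rw [← hJacobi] at hcompl
  exact pos_of_mul_pos_right hcompl hdet.le

end IsPMatrix

/-- A P²-matrix is invertible and its inverse is a P²-matrix. -/
theorem IsP2Matrix.inv {n : ℕ} (A : Matrix (Fin n) (Fin n) ℝ)
    (hA : IsP2Matrix A) : IsUnit A ∧ IsP2Matrix A⁻¹ := by
  refine ⟨(isUnit_iff_isUnit_det A).mpr hA.1.det_pos.ne'.isUnit, hA.1.inv, ?_⟩
  rw [inv_pow']
  exact hA.2.inv
end

section
/- Let A be a real n×n matrix all of whose leading principal minors are positive. Then A admits a stabilization matrix of the form D = diag(ε₁, ε₂, …, εₙ) with 1 = ε₁ > ε₂ > … > εₙ > 0, i.e., all eigenvalues of DA are positive and simple. -/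
/-!
Induction on `n`. Let `B` be the leading `(n-1) × (n-1)` block of `A`, so that by induction
`D' B` has simple positive eigenvalues `μ₁ < ⋯ < μₙ₋₁`, and take `D = diag (D', δ)`.
Expanding `det (X - D A)` along its last row gives `charpoly (D A) = X * charpoly (D' B) - δ r`
with `r` independent of `δ`. At points interlacing the roots `0 < μ₁ < ⋯ < μₙ₋₁` of
`X * charpoly (D' B)` its signs alternate, and these sign changes survive small `δ`. One more
sign change, between `0` and the first interlacing point, comes from
`charpoly (D A) (0) = -δ r(0)`, where the sign of `r(0)` is forced by `det A > 0` and
`det B > 0`. The intermediate value theorem then yields `n` distinct positive roots.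
-/

open Matrix Polynomial Filter Topology

theorem Fin.strictAnti_snoc {α : Type*} [Preorder α] {n : ℕ} {f : Fin n → α} {a : α}
    (hf : StrictAnti f) (ha : ∀ i, a < f i) : StrictAnti (Fin.snoc f a : Fin (n + 1) → α) := by
  refine Fin.strictAnti_iff_succ_lt.mpr fun i => ?_
  cases n with
  | zero => exact i.elim0
  | succ n =>
    induction i using Fin.lastCases with
    | last => simpa [Fin.succ_last] using ha (Fin.last _)
    | cast i =>
      rw [Fin.succ_castSucc, Fin.snoc_castSucc, Fin.snoc_castSucc]
      exact hf Fin.castSucc_lt_succ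

theorem StrictMono.exists_interlacing {n : ℕ} {ρ : Fin (n + 1) → ℝ} (hρ : StrictMono ρ) :
    ∃ T : Fin (n + 1) → ℝ, (∀ i, ρ i < T i) ∧ ∀ i j, i < j → T i < ρ j := by
  refine ⟨Fin.snoc (fun i : Fin n => (ρ i.castSucc + ρ i.succ) / 2) (ρ (Fin.last n) + 1),
    fun i => ?_, fun i j hij => ?_⟩
  · induction i using Fin.lastCases with
    | last => simp
    | cast i => simp only [Fin.snoc_castSucc]; linarith [hρ (Fin.castSucc_lt_succ (i := i))]
  · induction i using Fin.lastCases with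
    | last => exact absurd hij (Fin.le_last j).not_gt
    | cast i =>
      have := hρ.monotone (Fin.castSucc_lt_iff_succ_le.mp hij)
      simp only [Fin.snoc_castSucc]; linarith [hρ (Fin.castSucc_lt_succ (i := i))]

theorem prod_sub_mul_prod_sub_neg {ι : Type*} [Fintype ι] [DecidableEq ι] (ρ : ι → ℝ) {x y : ℝ}
    (j₀ : ι) (hx : x < ρ j₀) (hy : ρ j₀ < y) (h : ∀ j ≠ j₀, ρ j < x ∨ y < ρ j) :
    (∏ j, (x - ρ j)) * ∏ j, (y - ρ j) < 0 := by
  rw [← Finset.prod_mul_distrib, ← Finset.mul_prod_erase _ _ (Finset.mem_univ j₀)]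
  refine mul_neg_of_neg_of_pos (mul_neg_of_neg_of_pos (by linarith) (by linarith))
    (Finset.prod_pos fun j hj => ?_)
  rcases h j (Finset.ne_of_mem_erase hj) with h | h
  · exact mul_pos (by linarith) (by linarith)
  · exact mul_pos_of_neg_of_neg (by linarith) (by linarith)

theorem exists_mem_Ioo_eq_zero_of_mul_neg {f : ℝ → ℝ} (hf : Continuous f) {a b : ℝ} (hab : a ≤ b)
    (h : f a * f b < 0) : ∃ x ∈ Set.Ioo a b, f x = 0 := by
  rcases mul_neg_iff.mp h with ⟨ha, hb⟩ | ⟨ha, hb⟩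
  · exact intermediate_value_Ioo' hab hf.continuousOn ⟨hb, ha⟩
  · exact intermediate_value_Ioo hab hf.continuousOn ⟨ha, hb⟩

theorem exists_strictMono_zeros_of_sign_changes {f : ℝ → ℝ} (hf : Continuous f) {n : ℕ}
    {P : Fin (n + 1) → ℝ} (hP : StrictMono P)
    (hsign : ∀ i : Fin n, f (P i.castSucc) * f (P i.succ) < 0) :
    ∃ ν : Fin n → ℝ, StrictMono ν ∧ (∀ i, P 0 < ν i) ∧ ∀ i, f (ν i) = 0 := by
  choose ν hν hzero using fun i =>
    exists_mem_Ioo_eq_zero_of_mul_neg hf (hP Fin.castSucc_lt_succ).le (hsign i)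
  refine ⟨ν, fun i j hij => ?_, fun i => ?_, hzero⟩
  · calc ν i < P i.succ := (hν i).2
      _ ≤ P j.castSucc := hP.monotone (Fin.succ_le_castSucc_iff.mpr hij)
      _ < ν j := (hν j).1
  · exact (hP.monotone (Fin.zero_le _)).trans_lt (hν i).1

namespace Polynomial

theorem eq_prod_X_sub_C_of_injective {K : Type*} [Field K] {n : ℕ} {p : K[X]} (hp : p.Monic)
    (hdeg : p.natDegree = n) {ν : Fin n → K} (hν : Function.Injective ν)
    (hroot : ∀ i, p.IsRoot (ν i)) : p = ∏ i, (X - C (ν i)) := by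
  refine eq_of_monic_of_dvd_of_natDegree_le (monic_prod_of_monic _ _ fun i _ => monic_X_sub_C _)
    hp ?_ ?_
  · exact Finset.prod_dvd_of_coprime (fun i _ j _ hij => pairwise_coprime_X_sub_C hν hij)
      fun i _ => dvd_iff_isRoot.mpr (hroot i)
  · rw [natDegree_prod_of_monic _ _ fun i _ => monic_X_sub_C _]
    simp [hdeg]

theorem tendsto_eval_sub_C_mul (p r : ℝ[X]) (x : ℝ) :
    Tendsto (fun δ => (p - C δ * r).eval x) (𝓝 0) (𝓝 (p.eval x)) := by
  have : Continuous fun δ : ℝ => p.eval x - δ * r.eval x := by fun_prop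
  simpa using this.tendsto 0

end Polynomial

theorem eventually_exists_pos_roots_sub_C_mul {k : ℕ} {μ : Fin k → ℝ} (hμ : StrictMono μ)
    (hμpos : ∀ i, 0 < μ i) {r : ℝ[X]} (hr : 0 < r.eval 0 * ∏ j, -μ j) :
    ∀ᶠ δ in 𝓝[>] 0, ∃ ν : Fin (k + 1) → ℝ, StrictMono ν ∧ (∀ i, 0 < ν i) ∧
      ∀ i, (X * ∏ j, (X - C (μ j)) - C δ * r).IsRoot (ν i) := by
  set g : ℝ[X] := X * ∏ j, (X - C (μ j))
  set ρ : Fin (k + 1) → ℝ := Fin.cons 0 μ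
  have hρ : StrictMono ρ := Fin.strictMono_cons.mpr ⟨hμpos, hμ⟩
  have hg : ∀ x, g.eval x = ∏ j, (x - ρ j) := by
    simp [g, ρ, Fin.prod_univ_succ, eval_prod]
  obtain ⟨T, hρT, hTρ⟩ := hρ.exists_interlacing
  have hTpos : ∀ i, 0 < T i := fun i => (hρ.monotone (Fin.zero_le i)).trans_lt (hρT i)
  have hgT : ∀ i : Fin k, g.eval (T i.castSucc) * g.eval (T i.succ) < 0 := by
    intro i
    rw [hg, hg]
    refine prod_sub_mul_prod_sub_neg ρ i.succ (hTρ _ _ Fin.castSucc_lt_succ) (hρT _)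
      fun j hj => (lt_or_gt_of_ne hj).imp (fun h => ?_) (hTρ _ _)
    exact (hρ.monotone (Fin.le_castSucc_iff.mpr h)).trans_lt (hρT _)
  have hgT₀ : 0 < r.eval 0 * g.eval (T 0) := by
    have hprod : 0 < (∏ j, -μ j) * ∏ j, (T 0 - μ j) := by
      rw [← Finset.prod_mul_distrib]
      refine Finset.prod_pos fun j _ => mul_pos_of_neg_of_neg (by linarith [hμpos j]) ?_
      simpa [ρ] using hTρ 0 j.succ (Fin.succ_pos j)
    have hgeval : g.eval (T 0) = T 0 * ∏ j, (T 0 - μ j) := by simp [g, eval_prod]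
    -- `r(0)` and `∏ (T₀ - μ j)` both have the sign of `∏ (-μ j)`
    have : 0 < (r.eval 0 * ∏ j, (T 0 - μ j)) * (∏ j, -μ j) ^ 2 :=
      (mul_pos hr hprod).trans_eq (by ring)
    rw [hgeval, mul_left_comm]
    exact mul_pos (hTpos 0) (pos_of_mul_pos_left this (sq_nonneg _))
  have hsign : ∀ i : Fin k, ∀ᶠ δ in 𝓝 0,
      (g - C δ * r).eval (T i.castSucc) * (g - C δ * r).eval (T i.succ) < 0 := fun i =>
    ((tendsto_eval_sub_C_mul g r _).mul (tendsto_eval_sub_C_mul g r _)).eventually_lt_const (hgT i)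
  have hsign₀ : ∀ᶠ δ in 𝓝 0, 0 < r.eval 0 * (g - C δ * r).eval (T 0) :=
    ((tendsto_eval_sub_C_mul g r _).const_mul _).eventually_const_lt hgT₀
  filter_upwards [self_mem_nhdsWithin, nhdsWithin_le_nhds hsign₀,
    nhdsWithin_le_nhds (eventually_all.mpr hsign)] with δ (hδ : 0 < δ) h₀ hi
  have hP : StrictMono (Fin.cons 0 T : Fin (k + 2) → ℝ) :=
    Fin.strictMono_cons.mpr ⟨hTpos, fun i j hij => (hTρ i j hij).trans (hρT j)⟩
  refine exists_strictMono_zeros_of_sign_changes (g - C δ * r).continuous hP fun i => ?_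
  induction i using Fin.cases with
  | zero =>
    have : (g - C δ * r).eval 0 = -(δ * r.eval 0) := by simp [g]
    simp only [Fin.castSucc_zero, Fin.cons_zero, Fin.cons_succ, this]
    nlinarith
  | succ i => simpa [← Fin.succ_castSucc] using hi i

namespace Matrix

variable {R : Type*} [CommRing R]

theorem charmatrix_submatrix {n o : Type*} [Fintype n] [DecidableEq n] [Fintype o] [DecidableEq o]
    (M : Matrix n n R) {e : o → n} (he : Function.Injective e) :
    (charmatrix M).submatrix e e = charmatrix (M.submatrix e e) := by
  ext i j : 1
  by_cases h : i = j
  · simp [h]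
  · simp [charmatrix_apply_ne _ _ _ h, charmatrix_apply_ne _ _ _ (he.ne h)]

theorem eval_zero_charpoly {n : Type*} [Fintype n] [DecidableEq n] (M : Matrix n n R) :
    M.charpoly.eval 0 = (-1) ^ Fintype.card n * M.det := by
  rw [det_eq_sign_charpoly_coeff, coeff_zero_eq_eval_zero, ← mul_assoc, ← mul_pow, neg_one_mul,
    neg_neg, one_pow, one_mul]

theorem charpoly_updateRow_add_smul {n : Type*} [Fintype n] [DecidableEq n] (M : Matrix n n R)
    (i : n) (v : n → R) (δ : R) :
    (M.updateRow i (M i + δ • v)).charpoly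
      = M.charpoly - C δ * ((charmatrix M).updateRow i fun j => C (v j)).det := by
  have : charmatrix (M.updateRow i (M i + δ • v))
      = (charmatrix M).updateRow i (charmatrix M i + (-C δ) • fun j => C (v j)) := by
    ext a b : 1
    by_cases ha : a = i
    · subst ha
      by_cases hab : a = b
      · subst hab
        simp only [charmatrix_apply_eq, updateRow_self, Pi.add_apply, Pi.smul_apply, smul_eq_mul,
          map_add, map_mul, neg_smul, Pi.neg_apply]
        ring
      · simp only [charmatrix_apply_ne _ _ _ hab, updateRow_self, Pi.add_apply, Pi.smul_apply,
          smul_eq_mul, map_add, map_mul, neg_smul, Pi.neg_apply]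
        ring
    · by_cases hab : a = b
      · subst hab; simp [ha]
      · simp [ha, charmatrix_apply_ne _ _ _ hab]
  rw [charpoly, this, det_updateRow_add, det_updateRow_smul, updateRow_eq_self, charpoly]
  ring

theorem charpoly_eq_X_mul_of_row_last_eq_zero {m : ℕ} (M : Matrix (Fin (m + 1)) (Fin (m + 1)) R)
    (h : M (Fin.last m) = 0) :
    M.charpoly = X * (M.submatrix Fin.castSucc Fin.castSucc).charpoly := by
  rw [charpoly, det_succ_row _ (Fin.last m), Finset.sum_eq_single (Fin.last m)]
  · simp [Fin.succAbove_last, charmatrix_submatrix _ (Fin.castSucc_injective m), h, charpoly]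
  · intro j _ hj
    simp [charmatrix_apply_ne _ _ _ hj.symm, h]
  · simp

theorem exists_charpoly_diagonal_snoc_mul {m : ℕ} (M : Matrix (Fin (m + 1)) (Fin (m + 1)) R)
    (d : Fin m → R) :
    ∃ r : R[X], ∀ δ, (diagonal (Fin.snoc d δ) * M).charpoly
      = X * (diagonal d * M.submatrix Fin.castSucc Fin.castSucc).charpoly - C δ * r := by
  set N := diagonal (Fin.snoc d 0) * M
  have hN : ∀ δ, diagonal (Fin.snoc d δ) * M
      = N.updateRow (Fin.last m) (N (Fin.last m) + δ • M (Fin.last m)) := by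
    intro δ
    ext i j : 1
    induction i using Fin.lastCases with
    | last => simp [N]
    | cast i => simp [N, (Fin.castSucc_lt_last i).ne]
  have hNlast : N (Fin.last m) = 0 := by ext j; simp [N]
  refine ⟨((charmatrix N).updateRow (Fin.last m) fun j => C (M (Fin.last m) j)).det, fun δ => ?_⟩
  rw [hN, charpoly_updateRow_add_smul, charpoly_eq_X_mul_of_row_last_eq_zero N hNlast]
  congr 3
  ext i j : 1
  simp [N]

end Matrix

theorem eval_zero_mul_eval_zero_charpoly_pos {m : ℕ} {A : Matrix (Fin (m + 2)) (Fin (m + 2)) ℝ}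
    {ε : Fin (m + 1) → ℝ} (hε : ∀ i, 0 < ε i) (hA : 0 < A.det)
    (hB : 0 < (A.submatrix Fin.castSucc Fin.castSucc).det) {r : ℝ[X]}
    (hr : (diagonal (Fin.snoc ε 1) * A).charpoly
      = X * (diagonal ε * A.submatrix Fin.castSucc Fin.castSucc).charpoly - r) :
    0 < r.eval 0 * (diagonal ε * A.submatrix Fin.castSucc Fin.castSucc).charpoly.eval 0 := by
  set B := A.submatrix Fin.castSucc Fin.castSucc
  have hprodε : 0 < ∏ i, ε i := Finset.prod_pos fun i _ => hε i
  have heval := congrArg (eval 0) hr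
  simp only [eval_zero_charpoly, det_mul, det_diagonal, Fin.prod_snoc, Fintype.card_fin, eval_sub,
    eval_mul, eval_X, zero_mul, zero_sub, mul_one] at heval
  have hsign : ((-1 : ℝ) ^ (m + 1)) ^ 2 = 1 := by
    rw [← pow_mul, Even.neg_one_pow ⟨m + 1, by ring⟩]
  have : r.eval 0 * (diagonal ε * B).charpoly.eval 0 = (∏ i, ε i) ^ 2 * A.det * B.det := by
    rw [eval_zero_charpoly, det_mul, det_diagonal, Fintype.card_fin]
    linear_combination (-1) ^ (m + 1) * ((∏ i, ε i) * B.det) * heval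
      + (∏ i, ε i) * A.det * ((∏ i, ε i) * B.det) * hsign
  rw [this]
  exact mul_pos (mul_pos (pow_pos hprodε 2) hA) hB

theorem exists_strictAnti_diagonal_charpoly_eq_prod (m : ℕ)
    (A : Matrix (Fin (m + 1)) (Fin (m + 1)) ℝ)
    (hA : ∀ k : ℕ, (hk : k ≤ m + 1) → 1 ≤ k →
      0 < (A.submatrix (Fin.castLE hk) (Fin.castLE hk)).det) :
    ∃ ε : Fin (m + 1) → ℝ, ε 0 = 1 ∧ StrictAnti ε ∧ (∀ i, 0 < ε i) ∧
      ∃ μ : Fin (m + 1) → ℝ, StrictMono μ ∧ (∀ i, 0 < μ i) ∧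
        (diagonal ε * A).charpoly = ∏ i, (X - C (μ i)) := by
  induction m with
  | zero =>
    have hA₀ : 0 < A 0 0 := by simpa using hA 1 le_rfl le_rfl
    refine ⟨1, rfl, Subsingleton.strictAnti (α := Fin 1) _, fun _ => one_pos, fun _ => A 0 0,
      Subsingleton.strictMono (α := Fin 1) _, fun _ => hA₀, ?_⟩
    simp [charpoly]
  | succ m ih =>
    set B := A.submatrix Fin.castSucc Fin.castSucc
    have hB : ∀ k : ℕ, (hk : k ≤ m + 1) → 1 ≤ k →
        0 < (B.submatrix (Fin.castLE hk) (Fin.castLE hk)).det :=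
      fun k hk hk₁ => hA k (hk.trans m.succ.le_succ) hk₁
    obtain ⟨ε, hε₀, hε, hεpos, μ, hμ, hμpos, hμB⟩ := ih B hB
    obtain ⟨r, hr⟩ := exists_charpoly_diagonal_snoc_mul A ε
    have hdetA : 0 < A.det := by simpa using hA (m + 2) le_rfl (by omega)
    have hdetB : 0 < B.det := by simpa using hB (m + 1) le_rfl (by omega)
    have hr₀ : 0 < r.eval 0 * (diagonal ε * B).charpoly.eval 0 :=
      eval_zero_mul_eval_zero_charpoly_pos hεpos hdetA hdetB (by simpa using hr 1)
    rw [hμB, eval_prod] at hr₀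
    simp only [eval_sub, eval_X, eval_C, zero_sub] at hr₀
    obtain ⟨δ, ⟨ν, hν, hνpos, hνroot⟩, hδ, hδε⟩ :=
      ((eventually_exists_pos_roots_sub_C_mul hμ hμpos hr₀).and (eventually_mem_nhdsWithin.and
        (nhdsWithin_le_nhds (eventually_lt_nhds (hεpos (Fin.last m)))))).exists
    refine ⟨Fin.snoc ε δ, by simpa using hε₀, ?_, fun i => ?_, ν, hν, hνpos, ?_⟩
    · exact Fin.strictAnti_snoc hε fun i => hδε.trans_le (hε.antitone (Fin.le_last i))
    · induction i using Fin.lastCases with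
      | last => simpa using hδ
      | cast i => simpa using hεpos i
    · refine eq_prod_X_sub_C_of_injective (charpoly_monic _) (by simp) hν.injective fun i => ?_
      rw [hr, hμB]
      exact hνroot i

/-- A matrix with positive leading principal minors admits a stabilization
matrix of the form `D = diag (ε₁, …, εₙ)` with `1 = ε₁ > ε₂ > … > εₙ > 0`:
all eigenvalues of `D * A` are real, positive and simple. -/
theorem stabilization_decreasing_diagonal {n : ℕ} (hn : 0 < n)
    (A : Matrix (Fin n) (Fin n) ℝ)
    (hA : ∀ k : ℕ, (hk : k ≤ n) → 1 ≤ k →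
      0 < (A.submatrix (Fin.castLE hk) (Fin.castLE hk)).det) :
    ∃ ε : Fin n → ℝ, ε ⟨0, hn⟩ = 1 ∧ StrictAnti ε ∧ (∀ i, 0 < ε i) ∧
      ∃ μ : Fin n → ℝ, Function.Injective μ ∧ (∀ i, 0 < μ i) ∧
        (Matrix.diagonal ε * A).charpoly = ∏ i, (X - C (μ i)) := by
  obtain ⟨m, rfl⟩ := Nat.exists_eq_add_one_of_ne_zero hn.ne'
  obtain ⟨ε, hε₀, hε, hεpos, μ, hμ, hμpos, hchar⟩ :=
    exists_strictAnti_diagonal_charpoly_eq_prod m A hA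
  exact ⟨ε, hε₀, hε, hεpos, μ, hμ.injective, hμpos, hchar⟩
end
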